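/- Let p, q be coprime positive integers with q even, and b an integer such that q/2 and b have the same parity. Then |G(p,b,q)| = √(2q), where G(p,b,q) = ∑_{r=0}^{q-1} e^{2πi(p r² + b r)/q}. -/

import Mathlib

/-!
Expanding `G · conj G` and substituting `x = y + t` gives
`|G|² = q · ∑_{2pt ≡ 0} e((pt² + bt)/q)`, by orthogonality of the characters `y ↦ e(cy/q)`.
As `p` is a unit mod `q`, the condition `2pt ≡ 0` leaves only `t = 0` and `t = q/2`, and the
parity hypothesis makes the term at `t = q/2` equal to `1` as well, so `|G|² = 2q`.
-/

open Complex

noncomputable def G (p : ℕ) (b : ℤ) (q : ℕ) : ℂ :=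
  ∑ r ∈ Finset.range q,
    Complex.exp (2 * Real.pi * Complex.I * ((p * r ^ 2 + b * r : ℂ) / q))

open Finset ComplexConjugate

namespace AddChar

variable {R : Type*} [CommRing R] [Fintype R] [DecidableEq R]

theorem sum_quadratic_mul_conj {ψ : AddChar R ℂ} (hψ : ψ.IsPrimitive) (a b : R) :
    (∑ x, ψ (a * x ^ 2 + b * x)) * conj (∑ x, ψ (a * x ^ 2 + b * x)) =
      Fintype.card R * ∑ t with 2 * a * t = 0, ψ (a * t ^ 2 + b * t) := by
  calc (∑ x, ψ (a * x ^ 2 + b * x)) * conj (∑ x, ψ (a * x ^ 2 + b * x))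
      = ∑ y, ∑ x, ψ (a * x ^ 2 + b * x - (a * y ^ 2 + b * y)) := by
        simp_rw [map_sum, sum_mul_sum, ← map_neg_eq_conj, ← map_add_eq_mul, sub_eq_add_neg]
        exact sum_comm
    _ = ∑ y, ∑ t, ψ (a * t ^ 2 + b * t) * ψ (y * (2 * a * t)) := by
        refine sum_congr rfl fun y _ => (Fintype.sum_equiv (Equiv.addLeft y) _ _ fun t => ?_).symm
        rw [← map_add_eq_mul, Equiv.coe_addLeft]
        ring_nf
    _ = ∑ t, ψ (a * t ^ 2 + b * t) * if 2 * a * t = 0 then (Fintype.card R : ℂ) else 0 := by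
        rw [sum_comm]
        simp_rw [← mul_sum, sum_mulShift _ hψ, Nat.cast_ite, Nat.cast_zero]
    _ = _ := by
        simp_rw [mul_ite, mul_zero, ← sum_filter, mul_sum, mul_comm]

end AddChar

theorem Finset.sum_range_eq_sum_zmod {M : Type*} [AddCommMonoid M] {q : ℕ} [NeZero q]
    (f : ZMod q → M) : ∑ r ∈ range q, f r = ∑ x : ZMod q, f x :=
  sum_nbij' (↑) ZMod.val (by simp) (by simp [ZMod.val_lt])
    (fun _ hr => ZMod.val_cast_of_lt (mem_range.mp hr)) (by simp) (by simp)

theorem G_eq_sum_stdAddChar (p : ℕ) (b : ℤ) (q : ℕ) [NeZero q] :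
    G p b q = ∑ x : ZMod q, ZMod.stdAddChar ((p : ZMod q) * x ^ 2 + (b : ZMod q) * x) := by
  rw [G, ← sum_range_eq_sum_zmod]
  refine sum_congr rfl fun r _ => ?_
  have := ZMod.stdAddChar_coe (N := q) (p * r ^ 2 + b * r)
  push_cast at this
  rw [this, mul_div_assoc]

namespace ZMod

variable {m : ℕ}

theorem natCast_mul_intCast_eq_zero_of_even {c : ℤ} (hc : Even c) :
    (m : ZMod (2 * m)) * c = 0 := by
  obtain ⟨k, rfl⟩ := hc
  have hm : ((m * 2 : ℕ) : ZMod (2 * m)) = 0 := by rw [mul_comm, natCast_self]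
  push_cast at hm
  rw [Int.cast_add, ← two_mul, ← mul_assoc, hm, zero_mul]

theorem two_mul_eq_zero_iff [NeZero m] {t : ZMod (2 * m)} : 2 * t = 0 ↔ t = 0 ∨ t = m := by
  constructor
  · intro h
    have hdvd : 2 * m ∣ 2 * t.val := by
      rw [← natCast_eq_zero_iff]
      push_cast
      rwa [natCast_zmod_val]
    obtain ⟨c, hc⟩ := Nat.dvd_of_mul_dvd_mul_left two_pos hdvd
    have hc2 : c < 2 := by
      have := t.val_lt
      rw [hc] at this
      exact lt_of_mul_lt_mul_left (by linarith) (Nat.zero_le m)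
    rw [← natCast_zmod_val t, hc]
    interval_cases c <;> simp
  · rintro (rfl | rfl)
    · exact mul_zero 2
    · exact_mod_cast natCast_self (2 * m)

theorem intCast_mul_sq_add_mul_natCast_eq_zero {a b : ℤ} (ha : Odd a)
    (hb : Even ((m : ℤ) + b)) :
    (a : ZMod (2 * m)) * (m : ZMod (2 * m)) ^ 2 + b * m = 0 := by
  have hc : Even (a * m + b) := by
    obtain ⟨k, rfl⟩ := ha
    obtain ⟨c, hc⟩ := hb
    exact ⟨k * m + c, by linarith⟩
  rw [← natCast_mul_intCast_eq_zero_of_even hc]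
  push_cast
  ring

end ZMod

theorem abs_gauss_sum_even_same_parity_general (p q : ℕ) (b : ℤ) (hq : 0 < q)
    (hcop : Nat.Coprime p q) (heven : Even q) (hpar : Even ((q / 2 : ℤ) + b)) :
    ‖G p b q‖ = Real.sqrt (2 * q) := by
  obtain ⟨m, rfl⟩ := heven.two_dvd
  have : NeZero m := ⟨by omega⟩
  have hpu : IsUnit (p : ZMod (2 * m)) := (ZMod.unitOfCoprime p hcop).isUnit
  have hkernel :
      ({t | 2 * (p : ZMod (2 * m)) * t = 0} : Finset _) = {0, (m : ZMod (2 * m))} := by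
    ext t
    rw [mem_filter_univ, mul_right_comm, hpu.mul_left_eq_zero, ZMod.two_mul_eq_zero_iff]
    simp
  have hm : (m : ZMod (2 * m)) ≠ 0 := by
    rw [Ne, ZMod.natCast_eq_zero_iff]
    exact Nat.not_dvd_of_pos_of_lt (NeZero.pos m) (by omega)
  have hvanish := ZMod.intCast_mul_sq_add_mul_natCast_eq_zero (a := p) (b := b)
    (by exact_mod_cast (hcop.coprime_dvd_right (dvd_mul_right 2 m)).odd_of_right)
    (by rwa [show ((2 * m : ℕ) : ℤ) / 2 = m by omega] at hpar)
  have hsq :=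
    AddChar.sum_quadratic_mul_conj (ZMod.isPrimitive_stdAddChar (2 * m)) (p : ZMod (2 * m)) b
  rw [← G_eq_sum_stdAddChar, hkernel, sum_pair hm.symm, ZMod.card, mul_conj] at hsq
  push_cast at hvanish
  simp only [hvanish, mul_zero, zero_pow two_ne_zero, add_zero, AddChar.map_zero_eq_one] at hsq
  have hnormSq : normSq (G p b (2 * m)) = 2 * (2 * m : ℕ) := by
    exact_mod_cast hsq.trans (mul_comm _ _)
  rw [Complex.norm_def, hnormSq]

/-- If `p, q` are coprime positive integers, `q` is even, and `q/2` and `b` have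
the same parity, then `|G(p,b,q)| = √(2q)`. -/
theorem abs_gauss_sum_even_same_parity (p q : ℕ) (b : ℤ) (hp : 0 < p) (hq : 0 < q)
    (hcop : Nat.Coprime p q) (heven : Even q) (hpar : Even ((q / 2 : ℤ) + b)) :
    ‖G p b q‖ = Real.sqrt (2 * q) :=
  abs_gauss_sum_even_same_parity_general p q b hq hcop heven hpar
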